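/- Let S be a digraph on m nodes (m ≥ 1, self-loops allowed), and let S' be the one-step refinement of S on node u_m: add a new node u_{m+1} and edges u_i u_{m+1} for every u_i u_m ∈ E(S), u_{m+1} u_j for every u_m u_j ∈ E(S), and the self-loop u_{m+1} u_{m+1} if u_m u_m ∈ E(S). Then the bipartite graph B_S is connected if and only if B_{S'} is connected. -/

import Mathlib

/-- The undirected bipartite graph `B_S` associated with a directed edge relation `R`. -/
def bip {α : Type*} (R : α → α → Prop) : SimpleGraph (α ⊕ α) where
  Adj x y :=
    (∃ i j, x = Sum.inl i ∧ y = Sum.inr j ∧ R i j) ∨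
    (∃ i j, x = Sum.inr j ∧ y = Sum.inl i ∧ R i j)
  symm := by
    constructor
    rintro x y (⟨i, j, rfl, rfl, h⟩ | ⟨i, j, rfl, rfl, h⟩)
    · exact Or.inr ⟨i, j, rfl, rfl, h⟩
    · exact Or.inl ⟨i, j, rfl, rfl, h⟩
  loopless := by
    constructor
    rintro x (⟨i, j, h1, h2, -⟩ | ⟨i, j, h1, h2, -⟩) <;> subst h1 <;> simp_all

/-- Let `S'` be the one-step refinement of `S` on node `a`: a new node (`none`) is added as
a copy of `a`, with `x → y` an edge of `S'` iff `θ x → θ y` is an edge of `S`, where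
`θ = Option.getD · a` identifies the new node with `a`. Then the bipartite graph `B_S` is
connected if and only if `B_{S'}` is connected. -/
theorem refinement_bipartite_connected_iff {m : ℕ} (hm : 1 ≤ m)
    (E : Fin m → Fin m → Prop) (a : Fin m) :
    (bip E).Connected ↔
      (bip (fun x y : Option (Fin m) => E (x.getD a) (y.getD a))).Connected := by
  set E' : Option (Fin m) → Option (Fin m) → Prop :=
    fun x y => E (x.getD a) (y.getD a) with hE'
  -- homomorphism from bip E' to bip E
  let f : bip E' →g bip E :=
    { toFun := Sum.map (·.getD a) (·.getD a)
      map_rel' := by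
        rintro x y (⟨i, j, rfl, rfl, h⟩ | ⟨i, j, rfl, rfl, h⟩)
        · exact Or.inl ⟨i.getD a, j.getD a, rfl, rfl, h⟩
        · exact Or.inr ⟨i.getD a, j.getD a, rfl, rfl, h⟩ }
  -- homomorphism from bip E to bip E'
  let g : bip E →g bip E' :=
    { toFun := Sum.map some some
      map_rel' := by
        rintro x y (⟨i, j, rfl, rfl, h⟩ | ⟨i, j, rfl, rfl, h⟩)
        · exact Or.inl ⟨some i, some j, rfl, rfl, h⟩
        · exact Or.inr ⟨some i, some j, rfl, rfl, h⟩ }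
  constructor
  · rintro hc
    -- find a right-neighbor of a and a left-neighbor of a
    have h1 : ∃ j, E a j := by
      obtain ⟨p⟩ := hc.preconnected (Sum.inl a) (Sum.inr a)
      cases p with
      | cons h p =>
        rcases h with ⟨i, j, hx, hy, h⟩ | ⟨i, j, hx, hy, h⟩
        · cases hx; exact ⟨j, h⟩
        · cases hx
    have h2 : ∃ i, E i a := by
      obtain ⟨p⟩ := hc.preconnected (Sum.inr a) (Sum.inl a)
      cases p with
      | cons h p =>
        rcases h with ⟨i, j, hx, hy, h⟩ | ⟨i, j, hx, hy, h⟩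
        · cases hx
        · cases hx; exact ⟨i, h⟩
    obtain ⟨j₀, hj₀⟩ := h1
    obtain ⟨i₀, hi₀⟩ := h2
    have key : ∀ v, (bip E').Reachable v (g (f v)) := by
      rintro (v | v) <;> rcases v with _ | v
      · -- inl none ~ inr (some j₀) ~ inl (some a)
        have ha1 : (bip E').Adj (Sum.inl none) (Sum.inr (some j₀)) :=
          Or.inl ⟨none, some j₀, rfl, rfl, hj₀⟩
        have ha2 : (bip E').Adj (Sum.inl (some a)) (Sum.inr (some j₀)) :=
          Or.inl ⟨some a, some j₀, rfl, rfl, hj₀⟩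
        exact ha1.reachable.trans ha2.reachable.symm
      · exact SimpleGraph.Reachable.refl _
      · have ha1 : (bip E').Adj (Sum.inr none) (Sum.inl (some i₀)) :=
          Or.inr ⟨some i₀, none, rfl, rfl, hi₀⟩
        have ha2 : (bip E').Adj (Sum.inr (some a)) (Sum.inl (some i₀)) :=
          Or.inr ⟨some i₀, some a, rfl, rfl, hi₀⟩
        exact ha1.reachable.trans ha2.reachable.symm
      · exact SimpleGraph.Reachable.refl _
    haveI : Nonempty (Option (Fin m) ⊕ Option (Fin m)) := ⟨Sum.inl none⟩
    refine SimpleGraph.Connected.mk fun v w => ?_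
    exact ((key v).trans ((hc.preconnected (f v) (f w)).map g)).trans (key w).symm
  · rintro hc
    haveI : Nonempty (Fin m ⊕ Fin m) := ⟨Sum.inl a⟩
    refine SimpleGraph.Connected.mk fun v w => ?_
    have := (hc.preconnected (g v) (g w)).map f
    have hfg : ∀ x, f (g x) = x := by rintro (x | x) <;> rfl
    rwa [hfg, hfg] at this
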